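/- Let A ∈ ℝ^{d×d} (d ≥ 1) be symmetric with block structure S_1,…,S_p, and let 1 ≤ k ≤ d. Then there exists x* ∈ ℝ^d with ‖x*‖₂ = 1, ‖x*‖₀ ≤ k, and supp(x*) ⊆ S_i for some i ∈ [p], such that (x*)ᵀAx* ≥ yᵀAy for every y ∈ ℝ^d with ‖y‖₂ = 1 and ‖y‖₀ ≤ k. In other words, the Sparse PCA problem for a block-structured matrix admits an optimal solution whose support is contained in a single block. -/

import Mathlib

open Matrix BigOperators

/-- Number of nonzero coordinates of a vector (the "ℓ₀ norm"). -/
noncomputable def sparsity {d : ℕ} (x : Fin d → ℝ) : ℕ := {i : Fin d | x i ≠ 0}.ncard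

/-- The quadratic form xᵀ M x. -/
noncomputable def quadForm {d : ℕ} (M : Matrix (Fin d) (Fin d) ℝ) (x : Fin d → ℝ) : ℝ :=
  x ⬝ᵥ M.mulVec x

/-! The feasible set of unit vectors with at most `k` nonzero entries is compact, so the
quadratic form attains its maximum `M` on it at some `x`. Split `x` into its restrictions `xᵢ`
to the blocks. As `A` vanishes across blocks, `xᵀAx = ∑ xᵢᵀAxᵢ`, while `∑ ‖xᵢ‖² = ‖x‖² = 1`;
so some block has `‖xᵢ‖ > 0` and `xᵢᵀAxᵢ ≥ M ‖xᵢ‖²`. Then `xᵢ / ‖xᵢ‖` is feasible, supported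
in one block, and attains at least `M`. -/

section

variable {d : ℕ}

theorem sparsity_eq_sum_indicator (x : Fin d → ℝ) :
    sparsity x = ∑ i, {y : Fin d → ℝ | y i ≠ 0}.indicator (fun _ => 1) x := by
  rw [sparsity, Set.ncard_eq_toFinset_card', Set.toFinset_ofPred, Finset.card_filter]
  simp [Set.indicator_apply]

theorem lowerSemicontinuous_sparsity : LowerSemicontinuous (sparsity : (Fin d → ℝ) → ℕ) := by
  simp_rw [funext sparsity_eq_sum_indicator]
  exact lowerSemicontinuous_sum fun i _ =>
    (isOpen_ne_fun (continuous_apply i) continuous_const).lowerSemicontinuous_indicator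
      (Nat.zero_le 1)

theorem sparsity_mono {x y : Fin d → ℝ} (h : {i | x i ≠ 0} ⊆ {i | y i ≠ 0}) :
    sparsity x ≤ sparsity y :=
  Set.ncard_le_ncard h

theorem continuous_quadForm (A : Matrix (Fin d) (Fin d) ℝ) : Continuous (quadForm A) := by
  unfold quadForm; fun_prop

theorem quadForm_smul (A : Matrix (Fin d) (Fin d) ℝ) (t : ℝ) (x : Fin d → ℝ) :
    quadForm A (t • x) = t ^ 2 * quadForm A x := by
  simp only [quadForm, mulVec_smul, dotProduct_smul, smul_dotProduct, smul_eq_mul]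
  ring

def sparseSphere (d k : ℕ) : Set (Fin d → ℝ) := {y | ∑ i, y i ^ 2 = 1 ∧ sparsity y ≤ k}

theorem isCompact_sparseSphere (d k : ℕ) : IsCompact (sparseSphere d k) := by
  have hclosed : IsClosed (sparseSphere d k) :=
    (isClosed_eq (by fun_prop) continuous_const).inter
      (lowerSemicontinuous_sparsity.isClosed_preimage k)
  refine (isCompact_univ_pi fun _ => isCompact_Icc (a := (-1 : ℝ)) (b := 1)).of_isClosed_subset
    hclosed fun y hy i _ => abs_le.mp ?_
  rw [← sq_le_one_iff_abs_le_one, ← hy.1]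
  exact Finset.single_le_sum (fun j _ => sq_nonneg (y j)) (Finset.mem_univ i)

theorem sparseSphere_nonempty {k : ℕ} (hd : 1 ≤ d) (hk : 1 ≤ k) :
    (sparseSphere d k).Nonempty := by
  refine ⟨Pi.single ⟨0, hd⟩ 1, ?_, ?_⟩
  · simp [Pi.single_apply]
  · simpa [sparsity, Pi.single_apply] using hk

theorem exists_unit_smul_quadForm_ge (A : Matrix (Fin d) (Fin d) ℝ) {v : Fin d → ℝ} {M : ℝ}
    (hv : 0 < ∑ j, v j ^ 2) (hM : M * ∑ j, v j ^ 2 ≤ quadForm A v) :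
    ∃ t : ℝ, ∑ j, (t • v) j ^ 2 = 1 ∧ M ≤ quadForm A (t • v) := by
  have ht : (√(∑ j, v j ^ 2))⁻¹ ^ 2 = (∑ j, v j ^ 2)⁻¹ := by rw [inv_pow, Real.sq_sqrt hv.le]
  refine ⟨(√(∑ j, v j ^ 2))⁻¹, ?_, ?_⟩
  · simp only [Pi.smul_apply, smul_eq_mul, mul_pow, ← Finset.mul_sum, ht]
    exact inv_mul_cancel₀ hv.ne'
  · rwa [quadForm_smul, ht, inv_mul_eq_div, le_div_iff₀ hv]

theorem exists_pos_and_sum_mul_le {β : Type*} [Fintype β] {c q : β → ℝ} (hc : ∀ i, 0 ≤ c i)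
    (hc1 : ∑ i, c i = 1) (hq : ∀ i, c i = 0 → q i = 0) :
    ∃ i, 0 < c i ∧ (∑ j, q j) * c i ≤ q i := by
  classical
  set s := Finset.univ.filter fun i => 0 < c i
  have hs : ∀ f : β → ℝ, (∀ i, c i = 0 → f i = 0) → ∑ i ∈ s, f i = ∑ i, f i := fun f hf =>
    Finset.sum_filter_of_ne fun i _ hfi => (hc i).lt_of_ne' fun h => hfi (hf i h)
  have hcs : ∑ i ∈ s, c i = 1 := (hs c fun _ h => h).trans hc1
  obtain ⟨i, his, hi⟩ := Finset.exists_le_of_sum_le (s := s)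
    (Finset.nonempty_of_sum_ne_zero (hcs ▸ one_ne_zero))
    (g := q) (f := fun i => (∑ j, q j) * c i)
    (by rw [← Finset.mul_sum, hcs, mul_one, hs q hq])
  exact ⟨i, (Finset.mem_filter.mp his).2, hi⟩

section Blocks

variable {β : Type*} (blk : Fin d → β)

theorem sum_indicator_fiber [Fintype β] (x : Fin d → ℝ) :
    ∑ i, (blk ⁻¹' {i}).indicator x = x := by
  classical
  ext j
  simp only [Finset.sum_apply, Set.indicator_apply, Set.mem_preimage, Set.mem_singleton_iff]
  simp

theorem sum_sq_eq_sum_sum_sq_indicator_fiber [Fintype β] (x : Fin d → ℝ) :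
    ∑ j, x j ^ 2 = ∑ i, ∑ j, (blk ⁻¹' {i}).indicator x j ^ 2 := by
  classical
  rw [Finset.sum_comm]
  refine Finset.sum_congr rfl fun j _ => ?_
  simp only [Set.indicator_apply, Set.mem_preimage, Set.mem_singleton_iff]
  simp

variable (A : Matrix (Fin d) (Fin d) ℝ)

theorem indicator_fiber_dotProduct_mulVec_indicator_fiber (hA : ∀ a b, blk a ≠ blk b → A a b = 0)
    {i i' : β} (hii' : i ≠ i') (x y : Fin d → ℝ) :
    (blk ⁻¹' {i}).indicator x ⬝ᵥ A *ᵥ (blk ⁻¹' {i'}).indicator y = 0 := by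
  classical
  simp only [dotProduct, mulVec, Finset.mul_sum]
  refine Finset.sum_eq_zero fun a _ => Finset.sum_eq_zero fun b _ => ?_
  by_cases ha : blk a = i
  · by_cases hb : blk b = i'
    · simp [hA a b (ha ▸ hb ▸ hii')]
    · simp [Set.indicator_apply, hb]
  · simp [Set.indicator_apply, ha]

theorem quadForm_eq_sum_quadForm_indicator_fiber [Fintype β]
    (hA : ∀ a b, blk a ≠ blk b → A a b = 0) (x : Fin d → ℝ) :
    quadForm A x = ∑ i, quadForm A ((blk ⁻¹' {i}).indicator x) := by
  classical
  conv_lhs => rw [quadForm, ← sum_indicator_fiber blk x]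
  simp only [sum_dotProduct, mulVec_sum, dotProduct_sum]
  refine Finset.sum_congr rfl fun i _ => Finset.sum_eq_single i (fun i' _ hi' => ?_) (by simp)
  exact indicator_fiber_dotProduct_mulVec_indicator_fiber blk A hA hi' x x

theorem exists_unit_smul_indicator_fiber_quadForm_ge [Fintype β]
    (hA : ∀ a b, blk a ≠ blk b → A a b = 0) {x : Fin d → ℝ} (hx : ∑ j, x j ^ 2 = 1) :
    ∃ (i : β) (t : ℝ), ∑ j, (t • (blk ⁻¹' {i}).indicator x) j ^ 2 = 1 ∧
      quadForm A x ≤ quadForm A (t • (blk ⁻¹' {i}).indicator x) := by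
  set v := fun i => (blk ⁻¹' {i}).indicator x
  have hv : ∀ i, ∑ j, v i j ^ 2 = 0 → quadForm A (v i) = 0 := fun i h => by
    have : v i = 0 := funext fun j => pow_eq_zero_iff two_ne_zero |>.mp <|
      (Finset.sum_eq_zero_iff_of_nonneg fun j _ => sq_nonneg (v i j)).mp h j (Finset.mem_univ j)
    simp [this, quadForm]
  obtain ⟨i, hci, hqi⟩ :=
    exists_pos_and_sum_mul_le (fun i => Finset.sum_nonneg fun j _ => sq_nonneg (v i j))
    (by rw [← sum_sq_eq_sum_sum_sq_indicator_fiber blk, hx]) hv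
  rw [← quadForm_eq_sum_quadForm_indicator_fiber blk A hA] at hqi
  exact ⟨i, exists_unit_smul_quadForm_ge A hci hqi⟩

end Blocks

end

theorem stmt_4_general {d p k : ℕ} (hd : 1 ≤ d) (hk1 : 1 ≤ k)
    (A : Matrix (Fin d) (Fin d) ℝ)
    (S : Fin p → Set (Fin d))
    (hcover : (⋃ i, S i) = Set.univ)
    (hblock : ∀ i j : Fin p, i ≠ j → ∀ a ∈ S i, ∀ b ∈ S j, A a b = 0) :
    ∃ xstar : Fin d → ℝ, ∑ i, xstar i ^ 2 = 1 ∧ sparsity xstar ≤ k ∧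
      (∃ i : Fin p, {j | xstar j ≠ 0} ⊆ S i) ∧
      ∀ y : Fin d → ℝ, ∑ i, y i ^ 2 = 1 → sparsity y ≤ k →
        quadForm A y ≤ quadForm A xstar := by
  obtain ⟨x, ⟨hx, hxk⟩, hmax⟩ := (isCompact_sparseSphere d k).exists_isMaxOn
    (sparseSphere_nonempty hd hk1) (continuous_quadForm A).continuousOn
  choose blk hblk using fun j => Set.mem_iUnion.mp (hcover ▸ Set.mem_univ j)
  obtain ⟨i, t, hunit, hge⟩ := exists_unit_smul_indicator_fiber_quadForm_ge blk A
    (fun a b h => hblock _ _ h a (hblk a) b (hblk b)) hx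
  have hsupp : {j | (t • (blk ⁻¹' {i}).indicator x) j ≠ 0} ⊆ blk ⁻¹' {i} ∩ {j | x j ≠ 0} :=
    (Function.support_smul_subset_right _ _).trans Set.support_indicator.subset
  refine ⟨_, hunit, (sparsity_mono (hsupp.trans Set.inter_subset_right)).trans hxk,
    ⟨i, fun j hj => ?_⟩, fun y hy hyk => (hmax ⟨hy, hyk⟩).trans hge⟩
  exact (hsupp hj).1 ▸ hblk j

/-- The Sparse PCA problem for a block-structured symmetric matrix admits an optimal solution
whose support is contained in a single block. -/
theorem stmt_4 {d p k : ℕ} (hd : 1 ≤ d) (hp : 1 ≤ p) (hk1 : 1 ≤ k) (hkd : k ≤ d)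
    (A : Matrix (Fin d) (Fin d) ℝ) (hA : A.IsSymm)
    (S : Fin p → Set (Fin d))
    (hne : ∀ i, (S i).Nonempty)
    (hdisj : ∀ i j, i ≠ j → Disjoint (S i) (S j))
    (hcover : (⋃ i, S i) = Set.univ)
    (hblock : ∀ i j : Fin p, i ≠ j → ∀ a ∈ S i, ∀ b ∈ S j, A a b = 0) :
    ∃ xstar : Fin d → ℝ, ∑ i, xstar i ^ 2 = 1 ∧ sparsity xstar ≤ k ∧
      (∃ i : Fin p, {j | xstar j ≠ 0} ⊆ S i) ∧
      ∀ y : Fin d → ℝ, ∑ i, y i ^ 2 = 1 → sparsity y ≤ k →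
        quadForm A y ≤ quadForm A xstar :=
  stmt_4_general hd hk1 A S hcover hblock
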